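/- arXiv:2305.03906 — 2 statements merged into one kernel-verified Lean document; each statement's English description precedes it below -/
import Mathlib

section
/- Let ω = (ω_n, …, ω_1, ω_0) be a general basis of the polynomials of degree ≤ n over a field F, let 0 < k < n, let M be an (n−k)×n matrix over F, and let β = (β_1, …, β_n) ∈ F̄^n be arbitrary. Then, as an identity in F̄[x]: det([M; X_{ω,k}]) · det W(β) = (−1)^k · det N, where [M; X_{ω,k}] is the n×n matrix over F[x] obtained by stacking M on top of X_{ω,k}, W(β) is the n×n matrix with (i,j) entry ω_{n−i}(β_j), and N is the (n+1)×(n+1) matrix over F̄[x] whose top-left (n−k)×n block is the matrix product M·W(β), whose top-right (n−k)×1 block is zero, and whose entry in row n−k+i (1 ≤ i ≤ k+1) is ω_{k+1−i}(β_j) in column j (1 ≤ j ≤ n) and ω_{k+1−i}(x) in the last column. -/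
open Polynomial Matrix BigOperators

noncomputable section

/-- A *general basis* of the polynomials of degree ≤ `n` over `K`:
`ω i` is monic of degree `i` for every `i ≤ n`. -/
def IsGeneralBasis {K : Type*} [Field K] (n : ℕ) (ω : ℕ → Polynomial K) : Prop :=
  ∀ i ≤ n, (ω i).Monic ∧ (ω i).natDegree = i

/-- The `k × n` matrix `X_{ω,k}`: rows `1,…,k` carry `−I_k` in (1-based) columns
`n−k, …, n−1`, and the last column of row `i` is `ω_{k+1−i}`. -/
def Xmat {K : Type*} [Field K] (n k : ℕ) (ω : ℕ → Polynomial K) :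
    Matrix (Fin k) (Fin n) (Polynomial K) :=
  Matrix.of fun i j =>
    if (j : ℕ) = n - k - 1 + (i : ℕ) then -1
    else if (j : ℕ) = n - 1 then ω (k - (i : ℕ))
    else 0

/-- Stacking an `(n−k) × n` scalar matrix on top of a `k × n` polynomial matrix. -/
def stackMat {K : Type*} [Field K] {n k : ℕ}
    (M : Matrix (Fin (n - k)) (Fin n) K) (Y : Matrix (Fin k) (Fin n) (Polynomial K)) :
    Matrix (Fin n) (Fin n) (Polynomial K) :=
  Matrix.of fun i j =>
    if h : (i : ℕ) < n - k then Polynomial.C (M ⟨(i : ℕ), h⟩ j)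
    else Y ⟨(i : ℕ) - (n - k), by have := i.isLt; omega⟩ j

/-- The matrix `W(β)` with `(i,j)` entry `ω_{n−i}(β_j)` (1-based `i`). -/
def Wmat {K L : Type*} [Field K] [Field L] [Algebra K L] (n : ℕ)
    (ω : ℕ → Polynomial K) (α : Fin n → L) : Matrix (Fin n) (Fin n) L :=
  Matrix.of fun i j => Polynomial.aeval (α j) (ω (n - 1 - (i : ℕ)))

/-- The `(n+1) × (n+1)` matrix `N`: top-left block is `M · W(β)`, top-right block is
zero, and row `n−k+i` (1 ≤ i ≤ k+1) has entries `ω_{k+1−i}(β_j)` with last entry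
`ω_{k+1−i}(x)`. -/
def Nmat {K : Type*} [Field K] (n k : ℕ) (ω : ℕ → Polynomial K)
    (M : Matrix (Fin (n - k)) (Fin n) K) (β : Fin n → AlgebraicClosure K) :
    Matrix (Fin (n + 1)) (Fin (n + 1)) (Polynomial (AlgebraicClosure K)) :=
  Matrix.of fun i j =>
    if hi : (i : ℕ) < n - k then
      if hj : (j : ℕ) < n then
        Polynomial.C ((M.map (algebraMap K (AlgebraicClosure K)) * Wmat n ω β)
          ⟨(i : ℕ), hi⟩ ⟨(j : ℕ), hj⟩)
      else 0
    else
      if hj : (j : ℕ) < n then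
        Polynomial.C (Polynomial.aeval (β ⟨(j : ℕ), hj⟩) (ω (n - (i : ℕ))))
      else (ω (n - (i : ℕ))).map (algebraMap K (AlgebraicClosure K))

/-! Since the bottom-right entry of `N` is `ω₀(x) = 1`, `det N` is the determinant of the Schur
complement of that entry. As also `ω₀(β_j) = 1`, row `n-k+t` of the complement is
`ω_{k-t}(β_j) - ω_{k-t}(x) = -(X_{ω,k} · W(β))_{t,j}`, so the complement is
`[M; -X_{ω,k}] · W(β)`, and negating the `k` rows of `X_{ω,k}` costs the sign `(-1)^k`. -/

namespace Matrix

variable {R : Type*} [CommRing R] {n : ℕ}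

/-- The Schur complement of the bottom-right entry, computed as if that entry were `1`. -/
def schurComplementLast (A : Matrix (Fin (n + 1)) (Fin (n + 1)) R) : Matrix (Fin n) (Fin n) R :=
  A.submatrix Fin.castSucc Fin.castSucc -
    vecMulVec (fun i => A i.castSucc (Fin.last n)) (fun j => A (Fin.last n) j.castSucc)

theorem det_eq_det_schurComplementLast (A : Matrix (Fin (n + 1)) (Fin (n + 1)) R)
    (h : A (Fin.last n) (Fin.last n) = 1) : A.det = A.schurComplementLast.det := by
  have hl (i : Fin n) : finSumFinEquiv (Sum.inl i : Fin n ⊕ Fin 1) = i.castSucc := rfl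
  have hr (i : Fin 1) : finSumFinEquiv (Sum.inr i : Fin n ⊕ Fin 1) = Fin.last n := by
    rw [Subsingleton.elim i 0]; rfl
  have hD : (A.submatrix finSumFinEquiv finSumFinEquiv).toBlocks₂₂ = 1 := by
    ext i j
    fin_cases i; fin_cases j
    simpa [toBlocks₂₂, hr] using h
  rw [← det_submatrix_equiv_self finSumFinEquiv, ← fromBlocks_toBlocks (A.submatrix _ _), hD,
    det_fromBlocks_one₂₂]
  congr 1
  ext i j
  simp [schurComplementLast, toBlocks₁₁, toBlocks₁₂, toBlocks₂₁, mul_apply, vecMulVec_apply,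
    hl, hr]

end Matrix

theorem Fin.prod_ite_lt_sub_neg_one {R : Type*} [CommRing R] {n k : ℕ} (hkn : k ≤ n) :
    ∏ i : Fin n, (if (i : ℕ) < n - k then (1 : R) else -1) = (-1) ^ k := by
  rw [Fin.prod_univ_eq_prod_range (fun i => if i < n - k then (1 : R) else -1)]
  obtain ⟨m, rfl⟩ := Nat.exists_eq_add_of_le' hkn
  rw [Finset.prod_range_add, Finset.prod_eq_one fun i hi => if_pos (by simpa using hi)]
  simp

section

variable {K : Type*} [Field K] {n k : ℕ}

theorem stackMat_neg_eq_diagonal_mul (M : Matrix (Fin (n - k)) (Fin n) K)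
    (Y : Matrix (Fin k) (Fin n) K[X]) :
    stackMat M (-Y) =
      diagonal (fun i : Fin n => if (i : ℕ) < n - k then 1 else -1) * stackMat M Y := by
  ext i j
  by_cases hi : (i : ℕ) < n - k <;> simp [stackMat, diagonal_mul, hi]

theorem det_stackMat_neg (hkn : k ≤ n) (M : Matrix (Fin (n - k)) (Fin n) K)
    (Y : Matrix (Fin k) (Fin n) K[X]) :
    (stackMat M (-Y)).det = (-1) ^ k * (stackMat M Y).det := by
  rw [stackMat_neg_eq_diagonal_mul, det_mul, det_diagonal, Fin.prod_ite_lt_sub_neg_one hkn]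

theorem Xmat_row_eq (hkn : k < n) (ω : ℕ → K[X]) (t : Fin k) :
    Xmat n k ω t =
      Pi.single ⟨n - k - 1 + t, by omega⟩ (-1) +
        Pi.single ⟨n - 1, by omega⟩ (ω (k - t)) := by
  ext x : 1
  simp only [Xmat, of_apply, Pi.add_apply, Pi.single_apply, Fin.ext_iff]
  split_ifs <;> first | omega | simp

theorem Nmat_last_last (ω : ℕ → K[X]) (hω0 : ω 0 = 1) (M : Matrix (Fin (n - k)) (Fin n) K)
    (β : Fin n → AlgebraicClosure K) : Nmat n k ω M β (Fin.last n) (Fin.last n) = 1 := by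
  simp [Nmat, hω0]

theorem Nmat_schurComplementLast (hkn : k < n) (ω : ℕ → K[X]) (hω0 : ω 0 = 1)
    (M : Matrix (Fin (n - k)) (Fin n) K) (β : Fin n → AlgebraicClosure K) :
    (Nmat n k ω M β).schurComplementLast =
      (stackMat M (-Xmat n k ω)).map (mapRingHom (algebraMap K (AlgebraicClosure K))) *
        (Wmat n ω β).map C := by
  ext i j : 1
  by_cases hi : (i : ℕ) < n - k
  · simp [schurComplementLast, Nmat, stackMat, hi, vecMulVec_apply, mul_apply, Wmat]
  · have hn : ¬ n < n - k := by omega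
    have ha : n - 1 - (n - k - 1 + ((i : ℕ) - (n - k))) = n - i := by omega
    have hb : k - ((i : ℕ) - (n - k)) = n - i := by omega
    simp only [schurComplementLast, Nmat, Wmat, stackMat, Xmat_row_eq hkn, mul_apply, map_apply,
      of_apply, Matrix.sub_apply, submatrix_apply, vecMulVec_apply, Matrix.neg_apply,
      Pi.add_apply, Pi.single_apply, Fin.val_castSucc, Fin.val_last, Fin.is_lt, Fin.eta, hi, hn,
      lt_self_iff_false, ↓reduceDIte, ↓reduceIte, dite_eq_ite, tsub_self, hω0, hb, map_one,
      mul_one, neg_add_rev, coe_mapRingHom, Polynomial.map_add, Polynomial.map_neg,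
      apply_ite (Polynomial.map _), Polynomial.map_zero, Polynomial.map_one]
    simp only [add_mul, neg_mul, ite_mul, zero_mul, Finset.sum_add_distrib,
      Finset.sum_neg_distrib, Finset.sum_ite_eq', Finset.mem_univ, if_true]
    rw [ha, Nat.sub_self, hω0, map_one, C_1]
    ring

end

theorem stack_det_mul_W_det_general
    {K : Type*} [Field K] (n k : ℕ) (hkn : k < n)
    (ω : ℕ → Polynomial K) (hω : IsGeneralBasis n ω)
    (M : Matrix (Fin (n - k)) (Fin n) K) (β : Fin n → AlgebraicClosure K) :
    ((stackMat M (Xmat n k ω)).det).map (algebraMap K (AlgebraicClosure K)) *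
        Polynomial.C (Wmat n ω β).det =
      (-1 : Polynomial (AlgebraicClosure K)) ^ k * (Nmat n k ω M β).det := by
  have hω0 : ω 0 = 1 := (hω 0 n.zero_le).1.natDegree_eq_zero.mp (hω 0 n.zero_le).2
  rw [det_eq_det_schurComplementLast _ (Nmat_last_last ω hω0 M β),
    Nmat_schurComplementLast hkn ω hω0, det_mul]
  simp only [← RingHom.mapMatrix_apply, ← RingHom.map_det, det_stackMat_neg hkn.le]
  rw [map_mul, map_pow, map_neg, map_one, coe_mapRingHom, ← mul_assoc, ← mul_assoc, ← mul_pow,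
    neg_one_mul, neg_neg, one_pow, one_mul]

/-- `det [M; X_{ω,k}] · det W(β) = (−1)^k · det N` in `F̄[x]`, for an
arbitrary `(n−k) × n` matrix `M` over `F` and arbitrary `β ∈ F̄ⁿ`. -/
theorem stack_det_mul_W_det
    {K : Type*} [Field K] (n k : ℕ) (hk0 : 0 < k) (hkn : k < n)
    (ω : ℕ → Polynomial K) (hω : IsGeneralBasis n ω)
    (M : Matrix (Fin (n - k)) (Fin n) K) (β : Fin n → AlgebraicClosure K) :
    ((stackMat M (Xmat n k ω)).det).map (algebraMap K (AlgebraicClosure K)) *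
        Polynomial.C (Wmat n ω β).det =
      (-1 : Polynomial (AlgebraicClosure K)) ^ k * (Nmat n k ω M β).det :=
  stack_det_mul_W_det_general n k hkn ω hω M β
end
end

section
/- Let ω = (ω_n, …, ω_1, ω_0) be a general basis of the polynomials of degree ≤ n over a field F, let F, G ∈ F[x] with deg F = n > deg G = m, let B_ω be the Bézout matrix of F and G in ω, let 0 < k ≤ m, and let B_{ω,k} be the (n−k)×n submatrix of B_ω obtained by deleting its last k rows. Then det([B_{ω,k}; X_{ω,k}]) = detp_ω(B_{ω,k}) as an identity in F[x]. -/
open Polynomial Matrix BigOperators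

noncomputable section

/-- `B` is the Bézout matrix of `P` and `Q` in the basis `ω`:
`P(x)Q(y) − P(y)Q(x) = (x − y) · ω̄(x)ᵀ B ω̄(y)` in `K[x,y] = (K[y])[x]`,
where the outer variable is `x` and the inner one is `y`, and
`ω̄ = (ω_{n−1}, …, ω_1, ω_0)ᵀ`. -/
def BezoutRelation {K : Type*} [Field K] (n : ℕ) (ω : ℕ → Polynomial K)
    (P Q : Polynomial K) (B : Matrix (Fin n) (Fin n) K) : Prop :=
  P.map Polynomial.C * Polynomial.C Q - Polynomial.C P * Q.map Polynomial.C =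
    (Polynomial.X - Polynomial.C Polynomial.X) *
      ∑ i : Fin n, ∑ j : Fin n,
        (ω (n - 1 - (i : ℕ))).map Polynomial.C * Polynomial.C (ω (n - 1 - (j : ℕ))) *
          Polynomial.C (Polynomial.C (B i j))

/-- The `(n−k) × n` submatrix of an `n × n` matrix obtained by deleting the last `k` rows. -/
def topRows {K : Type*} (n k : ℕ) (B : Matrix (Fin n) (Fin n) K) :
    Matrix (Fin (n - k)) (Fin n) K :=
  Matrix.of fun i j => B ⟨(i : ℕ), by have := i.isLt; omega⟩ j

/-- The determinental polynomial of an `(n−k) × n` matrix `M` associated with `ω`: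
`detp_ω M = Σ_{i=0}^k det(M̂_i) · ω_i` where `M̂_i` consists of the first `n−k−1`
columns of `M` together with its (1-based) `(n−i)`-th column. -/
def detp {K : Type*} [Field K] {n k : ℕ} (hkn : k < n) (ω : ℕ → Polynomial K)
    (M : Matrix (Fin (n - k)) (Fin n) K) : Polynomial K :=
  ∑ i ∈ Finset.range (k + 1),
    Polynomial.C (Matrix.det (Matrix.of fun r c : Fin (n - k) =>
      if (c : ℕ) < n - k - 1 then M r ⟨(c : ℕ), by have := c.isLt; omega⟩
      else M r ⟨n - 1 - i, by omega⟩)) * ω i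


/-!
Let `S = [M; X_{ω,k}]`. Reordering the columns by a `(k+1)`-cycle, which moves column `n - 1`
to position `n - k - 1` and costs the sign `(-1)^k`, turns `S` into a block matrix
`[[A, B], [C, -1]]`, where `A = M̂_0`, `B` holds the columns `n - k - 1, …, n - 2` of `M`, and
`C` vanishes outside its last column `(ω_k, …, ω_1)`. By the Schur complement formula,
`det S = det (A + B C)` up to the two signs `(-1)^k`, which cancel. The matrix `A + B C` is `M̂_0`
with last column `∑_t ω_t · (column n - 1 - t of M)` (using `ω_0 = 1`), so multilinearity gives
`detp_ω M`.
-/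

namespace Matrix

variable {R : Type*} [CommRing R] {n : Type*} [Fintype n] [DecidableEq n]

theorem det_updateCol_finset_sum {α : Type*} (A : Matrix n n R) (j : n) (s : Finset α)
    (v : α → n → R) :
    (A.updateCol j (∑ a ∈ s, v a)).det = ∑ a ∈ s, (A.updateCol j (v a)).det := by
  simp only [← updateRow_transpose, ← det_transpose (updateCol _ _ _)]
  exact (detRowAlternating : (n → R) [⋀^n]→ₗ[R] R).map_update_sum s j v Aᵀ

theorem det_submatrix_equiv {m : Type*} [Fintype m] [DecidableEq m] (A : Matrix n n R)
    (e f : m ≃ n) :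
    (A.submatrix e f).det = Equiv.Perm.sign (e.symm.trans f) * A.det := by
  rw [← det_permute', ← det_submatrix_equiv_self e (A.submatrix id _), submatrix_submatrix]
  congr
  ext
  simp

theorem det_fromBlocks_neg_one₂₂ {m : Type*} [Fintype m] [DecidableEq m]
    (A : Matrix m m R) (B : Matrix m n R) (C : Matrix n m R) :
    (fromBlocks A B C (-1)).det = (-1) ^ Fintype.card n * (A + B * C).det := by
  have : Invertible (1 : Matrix n n R) := invertibleOne
  have : Invertible (-1 : Matrix n n R) := invertibleNeg 1
  rw [det_fromBlocks₂₂, invOf_neg, invOf_one, det_neg, det_one, mul_one, Matrix.mul_neg,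
    Matrix.mul_one, Matrix.neg_mul, sub_neg_eq_add]

end Matrix

theorem Finset.sum_fin_sub_add_eq_sum_range {R : Type*} [AddCommMonoid R] (k : ℕ)
    (f : ℕ → R) :
    ∑ i : Fin k, f (k - i) + f 0 = ∑ t ∈ Finset.range (k + 1), f t := by
  rw [Fin.sum_univ_eq_sum_range (fun i => f (k - i)), Finset.sum_range_succ',
    ← Finset.sum_range_reflect]
  congr 1
  refine Finset.sum_congr rfl fun i hi => ?_
  rw [Finset.mem_range] at hi
  congr 1
  omega

section BlockIndexing

variable {n k : ℕ}

def blockRowEquiv (hkn : k ≤ n) : Fin (n - k) ⊕ Fin k ≃ Fin n :=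
  finSumFinEquiv.trans (finCongr (Nat.sub_add_cancel hkn))

/-- The column order `0, …, n - k - 2, n - 1 | n - k - 1, …, n - 2`: the columns carrying `-I_k`
in `X_{ω,k}` come last. -/
def blockColEquiv (hkn : k < n) : Fin (n - k) ⊕ Fin k ≃ Fin n :=
  (blockRowEquiv hkn.le).trans (Fin.cycleIcc ⟨n - k - 1, by omega⟩ ⟨n - 1, by omega⟩).symm

@[simp]
theorem blockRowEquiv_inl_val (hkn : k ≤ n) (r : Fin (n - k)) :
    (blockRowEquiv hkn (.inl r) : ℕ) = r := by
  simp [blockRowEquiv]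

@[simp]
theorem blockRowEquiv_inr_val (hkn : k ≤ n) (i : Fin k) :
    (blockRowEquiv hkn (.inr i) : ℕ) = n - k + i := by
  simp [blockRowEquiv]

theorem blockColEquiv_inl_val (hkn : k < n) (c : Fin (n - k)) :
    (blockColEquiv hkn (.inl c) : ℕ) = if (c : ℕ) < n - k - 1 then (c : ℕ) else n - 1 := by
  have : NeZero n := ⟨by omega⟩
  split_ifs with hc
  · suffices blockColEquiv hkn (.inl c) = ⟨c, by omega⟩ from congrArg Fin.val this
    rw [blockColEquiv, Equiv.trans_apply, Equiv.symm_apply_eq, Fin.cycleIcc_of_lt (by simpa)]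
    ext; simp
  · suffices blockColEquiv hkn (.inl c) = ⟨n - 1, by omega⟩ from congrArg Fin.val this
    rw [blockColEquiv, Equiv.trans_apply, Equiv.symm_apply_eq,
      Fin.cycleIcc_of_last (by simp [Fin.le_iff_val_le_val]; omega)]
    ext; simp; omega

theorem blockColEquiv_inr_val (hkn : k < n) (i : Fin k) :
    (blockColEquiv hkn (.inr i) : ℕ) = n - k - 1 + i := by
  have : NeZero n := ⟨by omega⟩
  suffices blockColEquiv hkn (.inr i) = ⟨n - k - 1 + i, by omega⟩ from congrArg Fin.val this
  rw [blockColEquiv, Equiv.trans_apply, Equiv.symm_apply_eq,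
    Fin.cycleIcc_of_ge_of_lt (by simp [Fin.le_iff_val_le_val]) (by simp [Fin.lt_def]; omega)]
  ext
  simp only [blockRowEquiv_inr_val, Fin.val_add, Fin.val_one', Nat.add_mod_mod]
  rw [Nat.mod_eq_of_lt (by omega)]
  omega

theorem sign_blockRowEquiv_symm_trans_blockColEquiv (hkn : k < n) :
    Equiv.Perm.sign ((blockRowEquiv hkn.le).symm.trans (blockColEquiv hkn)) = (-1) ^ k := by
  rw [blockColEquiv, ← Equiv.trans_assoc, Equiv.symm_trans_self, Equiv.refl_trans,
    Equiv.Perm.sign_symm, Fin.sign_cycleIcc_of_le (by simp [Fin.le_iff_val_le_val]; omega)]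
  congr 1
  simp; omega

end BlockIndexing

section DetpMinor

variable {α : Type*} {n k : ℕ}

/-- The matrix `M̂_t` of `detp`. -/
def detpMinor (M : Matrix (Fin (n - k)) (Fin n) α) (t : ℕ) :
    Matrix (Fin (n - k)) (Fin (n - k)) α :=
  Matrix.of fun r c => if (c : ℕ) < n - k - 1 then M r ⟨c, by omega⟩
    else M r ⟨n - 1 - t, by have := r.2; omega⟩

theorem detpMinor_updateCol (hkn : k < n) (M : Matrix (Fin (n - k)) (Fin n) α) (t : ℕ) :
    (detpMinor M 0).updateCol ⟨n - k - 1, by omega⟩ (fun r => M r ⟨n - 1 - t, by omega⟩) =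
      detpMinor M t := by
  ext r c
  simp only [updateCol_apply, detpMinor, of_apply, Fin.ext_iff]
  split_ifs <;> first | rfl | omega

end DetpMinor

section StackDet

variable {K : Type*} [Field K] {n k : ℕ} (hkn : k < n) (ω : ℕ → K[X])
  (M : Matrix (Fin (n - k)) (Fin n) K)

theorem stackMat_Xmat_submatrix_eq_fromBlocks :
    (stackMat M (Xmat n k ω)).submatrix (blockRowEquiv hkn.le) (blockColEquiv hkn) =
      fromBlocks ((detpMinor M 0).map C) (of fun r i => C (M r (blockColEquiv hkn (.inr i))))
        (of fun (i : Fin k) (c : Fin (n - k)) => if (c : ℕ) = n - k - 1 then ω (k - i) else 0)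
        (-1) := by
  ext (r | i) (c | j) : 1
  · simp only [submatrix_apply, stackMat, of_apply, blockRowEquiv_inl_val, Fin.is_lt, dif_pos,
      fromBlocks_apply₁₁, map_apply, detpMinor]
    split_ifs with hc <;> congr 2 <;> ext <;> simp [blockColEquiv_inl_val, hc]
  · simp [stackMat]
  · have := c.2
    simp only [submatrix_apply, stackMat, Xmat, of_apply, blockRowEquiv_inr_val,
      blockColEquiv_inl_val, fromBlocks_apply₂₁]
    split_ifs <;> simp_all <;> omega
  · have := i.2
    have := j.2
    simp only [submatrix_apply, stackMat, Xmat, of_apply, blockRowEquiv_inr_val,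
      blockColEquiv_inr_val, fromBlocks_apply₂₂, Matrix.neg_apply, one_apply, Fin.ext_iff]
    rw [dif_neg (by omega)]
    split_ifs <;> simp <;> omega

theorem detpMinor_map_add_mul_eq_updateCol (hω0 : ω 0 = 1) :
    (detpMinor M 0).map C +
        (of fun r i => C (M r (blockColEquiv hkn (.inr i)))) *
          (of fun (i : Fin k) (c : Fin (n - k)) =>
            if (c : ℕ) = n - k - 1 then ω (k - i) else 0) =
      ((detpMinor M 0).map C).updateCol ⟨n - k - 1, by omega⟩
        (∑ t ∈ Finset.range (k + 1), ω t • fun r => C (M r ⟨n - 1 - t, by omega⟩)) := by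
  ext r c : 1
  rw [Matrix.add_apply, mul_apply, updateCol_apply]
  simp only [of_apply, mul_ite, mul_zero, Finset.sum_ite_irrel, Finset.sum_const_zero, Fin.ext_iff]
  split_ifs with hc
  · rw [Finset.sum_apply, ← Finset.sum_fin_sub_add_eq_sum_range, add_comm]
    simp only [Pi.smul_apply, smul_eq_mul, hω0, one_mul, map_apply, detpMinor, of_apply, hc]
    rw [if_neg (lt_irrefl _)]
    congr 1
    refine Finset.sum_congr rfl fun i _ => ?_
    rw [mul_comm]
    congr 3
    ext
    rw [blockColEquiv_inr_val]
    exact (by omega : n - k - 1 + i = n - 1 - (k - i))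
  · rw [add_zero]

theorem detp_eq_sum_detpMinor :
    detp hkn ω M = ∑ t ∈ Finset.range (k + 1), C (detpMinor M t).det * ω t :=
  rfl

theorem det_updateCol_detpMinor_sum :
    (((detpMinor M 0).map C).updateCol ⟨n - k - 1, by omega⟩
        (∑ t ∈ Finset.range (k + 1), ω t • fun r => C (M r ⟨n - 1 - t, by omega⟩))).det =
      detp hkn ω M := by
  rw [detp_eq_sum_detpMinor, det_updateCol_finset_sum]
  refine Finset.sum_congr rfl fun t _ => ?_
  have hcol : (((detpMinor M 0).map C).updateCol ⟨n - k - 1, by omega⟩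
      fun r => C (M r ⟨n - 1 - t, by omega⟩)) = (detpMinor M t).map C := by
    rw [← detpMinor_updateCol hkn M t, map_updateCol]
    rfl
  rw [det_updateCol_smul, mul_comm, hcol, RingHom.map_det, RingHom.mapMatrix_apply]

theorem det_stackMat_Xmat (hω0 : ω 0 = 1) : (stackMat M (Xmat n k ω)).det = detp hkn ω M := by
  have h := det_submatrix_equiv (stackMat M (Xmat n k ω)) (blockRowEquiv hkn.le)
    (blockColEquiv hkn)
  rw [stackMat_Xmat_submatrix_eq_fromBlocks, det_fromBlocks_neg_one₂₂,
    detpMinor_map_add_mul_eq_updateCol hkn ω M hω0, det_updateCol_detpMinor_sum,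
    sign_blockRowEquiv_symm_trans_blockColEquiv, Fintype.card_fin] at h
  push_cast at h
  exact (mul_left_cancel₀ (pow_ne_zero _ (neg_ne_zero.mpr one_ne_zero)) h).symm

end StackDet

theorem stack_det_eq_detp_bezout_general
    {K : Type*} [Field K] (n m k : ℕ) (hmn : m < n) (hkm : k ≤ m)
    (ω : ℕ → Polynomial K) (hω : IsGeneralBasis n ω)
    (B : Matrix (Fin n) (Fin n) K) :
    (stackMat (topRows n k B) (Xmat n k ω)).det =
      detp (lt_of_le_of_lt hkm hmn) ω (topRows n k B) := by
  have hω0 : ω 0 = 1 := by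
    obtain ⟨hmonic, hdeg⟩ := hω 0 n.zero_le
    exact hmonic.natDegree_eq_zero.mp hdeg
  exact det_stackMat_Xmat _ ω _ hω0

/-- for the truncated Bézout matrix `B_{ω,k}` of `F` and `G` in `ω`,
`det [B_{ω,k}; X_{ω,k}] = detp_ω (B_{ω,k})` in `F[x]`. -/
theorem stack_det_eq_detp_bezout
    {K : Type*} [Field K] (n m k : ℕ) (hmn : m < n) (hk0 : 0 < k) (hkm : k ≤ m)
    (ω : ℕ → Polynomial K) (hω : IsGeneralBasis n ω)
    (P Q : Polynomial K) (hdegP : P.natDegree = n) (hdegQ : Q.natDegree = m)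
    (B : Matrix (Fin n) (Fin n) K) (hB : BezoutRelation n ω P Q B) :
    (stackMat (topRows n k B) (Xmat n k ω)).det =
      detp (lt_of_le_of_lt hkm hmn) ω (topRows n k B) :=
  stack_det_eq_detp_bezout_general n m k hmn hkm ω hω B
end
end
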